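/- Fix integers d ≥ 1, K ≥ 1, T ≥ 2, reals ε > 0, m ≥ 1, B ≥ 1. Let A be a nonempty finite set of at most K vectors in the closed Euclidean unit ball of ℝ^d, let C ⊆ A with |C| ≤ B·d, and let π : C → [0,1] with Σ_{α∈C} π(α) = 1 be such that the matrix W = Σ_{α∈C} π(α)·ααᵀ is invertible and aᵀW⁻¹a ≤ 2d for all a ∈ A. For α ∈ C set n_α = ⌈π(α)·m⌉ and V = Σ_{α∈C} n_α·ααᵀ. Let θ* ∈ ℝ^d, and let (η_{α,k})_{α∈C, 1≤k≤n_α} and (z_α)_{α∈C} be jointly independent random variables on a common probability space, each η_{α,k} being 1-sub-Gaussian and each z_α having the Laplace distribution with scale 1/ε. Define θ̂ = V⁻¹ · Σ_{α∈C} ( n_α·⟨θ*, α⟩ + Σ_{k=1}^{n_α} η_{α,k} + z_α )·α. Then, with γ = √((4d/m)·ln(4KT²)) + 4·(B·d² + d·ln(4KT²))/(ε·m), one has P[ there exists a ∈ A with |⟨a, θ̂ − θ*⟩| > γ ] ≤ 1/T². -/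

import Mathlib

/-!
With `c_α = aᵀ V⁻¹ α`, the error `⟨a, θ̂ - θ*⟩` is `∑ c_α S_α + ∑ c_α z_α`, where `S_α` is the sum
of the `n_α` reward noises of `α`. Since `n_α ≥ m π(α)`, `V ⪰ m W`, hence
`∑ n_α c_α² = aᵀ V⁻¹ a ≤ aᵀ W⁻¹ a / m ≤ 2d/m =: τ` for every `a ∈ A`; as `C ⊆ A` this also
gives `|c_α| ≤ τ`. The first sum is therefore sub-Gaussian with variance proxy `τ`, and the
second is at most `τ ∑ |z_α|`. Since `E exp (ε|z_α|/2) = 2`, a Chernoff bound controls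
`∑ |z_α|`; a union bound over the Laplace event and the two tails for each `a ∈ A` costs
`(1 + 2K) / (4KT²) ≤ 1/T²`.
-/

open MeasureTheory ProbabilityTheory Matrix

/-- The Laplace distribution on `ℝ` with scale `1/ε` (for `ε > 0`): the measure with
density `x ↦ (ε/2) * exp (−ε * |x|)` with respect to Lebesgue measure. -/
noncomputable def laplaceMeasure (ε : ℝ) : Measure ℝ :=
  MeasureTheory.volume.withDensity
    (fun x => ENNReal.ofReal ((ε / 2) * Real.exp (-ε * |x|)))

section Laplace

open Real

lemma integral_exp_neg_mul_abs {c : ℝ} (hc : 0 < c) : ∫ x, exp (-c * |x|) = 2 / c := by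
  rw [integral_comp_abs (f := fun x => exp (-c * x)), integral_exp_mul_Ioi (by linarith)]
  field_simp
  simp

lemma integral_exp_mul_abs_laplaceMeasure {ε t : ℝ} (hε : 0 < ε) (ht : t < ε) :
    ∫ x, exp (t * |x|) ∂laplaceMeasure ε = ε / (ε - t) := by
  rw [laplaceMeasure, integral_withDensity_eq_integral_toReal_smul (by fun_prop)
    (by simp)]
  have hdens (x : ℝ) : (ENNReal.ofReal ((ε / 2) * exp (-ε * |x|))).toReal • exp (t * |x|) =
      ε / 2 * exp (-(ε - t) * |x|) := by
    rw [ENNReal.toReal_ofReal (by positivity), smul_eq_mul, mul_assoc, ← exp_add]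
    ring_nf
  simp_rw [hdens]
  rw [integral_const_mul, integral_exp_neg_mul_abs (by linarith)]
  field_simp

lemma mgf_abs_of_map_eq_laplaceMeasure {Ω : Type*} [MeasurableSpace Ω] {μ : Measure Ω}
    {z : Ω → ℝ} {ε t : ℝ} (hz : Measurable z) (hlaw : μ.map z = laplaceMeasure ε)
    (hε : 0 < ε) (ht : t < ε) :
    mgf (fun ω => |z ω|) μ t = ε / (ε - t) := by
  rw [← integral_exp_mul_abs_laplaceMeasure hε ht, ← hlaw]
  exact (mgf_map hz.aemeasurable (X := fun x => |x|) (by fun_prop)).symm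

lemma measureReal_le_sum_abs_le {Ω ι : Type*} [MeasurableSpace Ω] {μ : Measure Ω}
    [IsProbabilityMeasure μ] [Fintype ι] {z : ι → Ω → ℝ} {ε : ℝ}
    (hindep : iIndepFun z μ) (hz : ∀ i, Measurable (z i))
    (hlaw : ∀ i, μ.map (z i) = laplaceMeasure ε) (hε : 0 < ε) {b : ℝ}
    (hb : (Fintype.card ι : ℝ) ≤ b) (r : ℝ) :
    μ.real {ω | 2 * (b + r) / ε ≤ ∑ i, |z i ω|} ≤ exp (-r) := by
  have hmgf : mgf (∑ i, fun ω => |z i ω|) μ (ε / 2) = 2 ^ Fintype.card ι := by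
    refine ((hindep.comp (fun _ x => |x|) fun _ => measurable_abs).mgf_sum
      (fun i => (hz i).abs) Finset.univ).trans ?_
    refine (Finset.prod_eq_pow_card fun i _ =>
      mgf_abs_of_map_eq_laplaceMeasure (hz i) (hlaw i) hε (by linarith)).trans ?_
    rw [Finset.card_univ]
    congr 1
    field_simp
    ring
  have hint : Integrable (fun ω => exp (ε / 2 * (∑ i, fun ω => |z i ω|) ω)) μ :=
    Integrable.of_integral_ne_zero (by rw [← mgf, hmgf]; positivity)
  have hchernoff := measure_ge_le_exp_mul_mgf (2 * (b + r) / ε) (by positivity) hint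
  rw [hmgf, Finset.sum_fn] at hchernoff
  have hpow : (2 : ℝ) ^ Fintype.card ι ≤ exp b :=
    calc (2 : ℝ) ^ Fintype.card ι ≤ exp 1 ^ Fintype.card ι := by
          gcongr; linarith [add_one_le_exp (1 : ℝ)]
      _ ≤ exp b := by rw [exp_one_pow]; exact exp_le_exp.2 hb
  refine hchernoff.trans ?_
  calc _ ≤ exp (-(b + r)) * exp b := by
        rw [show -(ε / 2) * (2 * (b + r) / ε) = -(b + r) by field_simp]; gcongr
    _ = exp (-r) := by rw [← exp_add]; ring_nf

end Laplace

section Subgaussian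

open Real
open scoped NNReal

namespace ProbabilityTheory.HasSubgaussianMGF

variable {Ω : Type*} [MeasurableSpace Ω] {μ : Measure Ω} {X : Ω → ℝ}

lemma mono {c c' : ℝ≥0} (h : HasSubgaussianMGF X c μ) (hc : c ≤ c') :
    HasSubgaussianMGF X c' μ :=
  ⟨h.integrable_exp_mul, fun t => (h.mgf_le t).trans (exp_le_exp.2 (by gcongr))⟩

lemma measureReal_le_abs_le [IsFiniteMeasure μ] {c : ℝ≥0} (h : HasSubgaussianMGF X c μ) {r : ℝ}
    (hr : 0 ≤ r) :
    μ.real {ω | r ≤ |X ω|} ≤ 2 * exp (-r ^ 2 / (2 * c)) := by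
  have hsplit : {ω | r ≤ |X ω|} ⊆ {ω | r ≤ X ω} ∪ {ω | r ≤ (-X) ω} :=
    fun ω (hω : r ≤ |X ω|) => le_abs.1 hω
  calc μ.real {ω | r ≤ |X ω|} ≤ μ.real {ω | r ≤ X ω} + μ.real {ω | r ≤ (-X) ω} :=
        (measureReal_mono hsplit).trans (measureReal_union_le _ _)
    _ ≤ 2 * exp (-r ^ 2 / (2 * c)) := by
        linarith [h.measure_ge_le hr, h.neg.measure_ge_le hr]

end ProbabilityTheory.HasSubgaussianMGF

lemma measureReal_sqrt_le_abs_sum_mul_sum_le {Ω ι : Type*} [MeasurableSpace Ω]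
    {μ : Measure Ω} [IsProbabilityMeasure μ] [Fintype ι] {n : ι → ℕ}
    {η : (i : ι) → Fin (n i) → Ω → ℝ}
    (hindep : iIndepFun (fun p : (Σ i, Fin (n i)) => η p.1 p.2) μ)
    (hη : ∀ i k, HasSubgaussianMGF (η i k) 1 μ) (c : ι → ℝ) {v : ℝ}
    (hv : ∑ i, n i * c i ^ 2 ≤ v) (hv0 : 0 < v) {r : ℝ} (hr : 0 ≤ r) :
    μ.real {ω | √(2 * v * r) ≤ |∑ i, c i * ∑ k, η i k ω|} ≤ 2 * exp (-r) := by
  have hsum := HasSubgaussianMGF.sum_of_iIndepFun (s := Finset.univ)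
    (hindep.comp (fun p x => c p.1 * x) fun p => measurable_const_mul _)
    fun p _ => (hη p.1 p.2).const_mul (c p.1)
  have hX : HasSubgaussianMGF (fun ω => ∑ i, c i * ∑ k, η i k ω) v.toNNReal μ := by
    refine (hsum.mono ?_).congr (ae_of_all _ fun ω => ?_)
    · rw [Real.le_toNNReal_iff_coe_le hv0.le]
      convert hv using 1
      rw [NNReal.coe_sum]
      -- the parameter `⟨c ^ 2, _⟩ * 1` produced by `const_mul` is opaque to `simp`, not to `rfl`
      trans ∑ p : Σ i, Fin (n i), c p.1 ^ 2 * 1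
      · exact Finset.sum_congr rfl fun p _ => rfl
      · simp [Fintype.sum_sigma]
    · simp [Fintype.sum_sigma, Finset.mul_sum]
  refine (hX.measureReal_le_abs_le (sqrt_nonneg _)).trans_eq ?_
  rw [Real.coe_toNNReal _ hv0.le, sq_sqrt (by positivity)]
  field_simp

end Subgaussian

namespace Matrix

variable {n : Type*} [Fintype n] {M N : Matrix n n ℝ}

lemma IsHermitian.dotProduct_mulVec_comm (hM : M.IsHermitian) (x y : n → ℝ) :
    x ⬝ᵥ M *ᵥ y = y ⬝ᵥ M *ᵥ x := by
  have hT : Mᵀ = M := by simpa [conjTranspose_eq_transpose_of_trivial] using hM.eq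
  rw [dotProduct_mulVec, ← mulVec_transpose, hT, dotProduct_comm]

lemma PosSemidef.dotProduct_mulVec_self_nonneg (hM : M.PosSemidef) (x : n → ℝ) :
    0 ≤ x ⬝ᵥ M *ᵥ x := by
  simpa using hM.dotProduct_mulVec_nonneg x

lemma PosSemidef.two_mul_abs_dotProduct_mulVec_le (hM : M.PosSemidef) (x y : n → ℝ) :
    2 * |x ⬝ᵥ M *ᵥ y| ≤ x ⬝ᵥ M *ᵥ x + y ⬝ᵥ M *ᵥ y := by
  have expand (s : ℝ) : (x + s • y) ⬝ᵥ M *ᵥ (x + s • y) =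
      x ⬝ᵥ M *ᵥ x + 2 * s * (x ⬝ᵥ M *ᵥ y) + s ^ 2 * (y ⬝ᵥ M *ᵥ y) := by
    simp only [mulVec_add, mulVec_smul, dotProduct_add, add_dotProduct, dotProduct_smul,
      smul_dotProduct, smul_eq_mul, hM.isHermitian.dotProduct_mulVec_comm y x]
    ring
  have h₁ := expand (-1) ▸ hM.dotProduct_mulVec_self_nonneg (x + (-1 : ℝ) • y)
  have h₂ := expand 1 ▸ hM.dotProduct_mulVec_self_nonneg (x + (1 : ℝ) • y)
  cases abs_cases (x ⬝ᵥ M *ᵥ y) <;> linarith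

lemma PosDef.of_mul_le (hM : M.PosDef) (hN : N.IsHermitian) {c : ℝ} (hc : 0 < c)
    (hle : ∀ x, c * (x ⬝ᵥ M *ᵥ x) ≤ x ⬝ᵥ N *ᵥ x) : N.PosDef :=
  .of_dotProduct_mulVec_pos hN fun x hx => by
    simpa using (mul_pos hc (by simpa using hM.dotProduct_mulVec_pos hx)).trans_le (hle x)

variable [DecidableEq n]

lemma PosSemidef.two_mul_dotProduct_sub_le_inv (hM : M.PosSemidef) (hMu : IsUnit M)
    (a y : n → ℝ) : 2 * (a ⬝ᵥ y) - y ⬝ᵥ M *ᵥ y ≤ a ⬝ᵥ M⁻¹ *ᵥ a := by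
  have hu : M *ᵥ (M⁻¹ *ᵥ a) = a := by
    rw [mulVec_mulVec, mul_nonsing_inv _ ((isUnit_iff_isUnit_det M).1 hMu), one_mulVec]
  have := hM.dotProduct_mulVec_self_nonneg (y - M⁻¹ *ᵥ a)
  rw [mulVec_sub, hu, dotProduct_sub, sub_dotProduct, sub_dotProduct,
    hM.isHermitian.dotProduct_mulVec_comm (M⁻¹ *ᵥ a) y, hu, dotProduct_comm (M⁻¹ *ᵥ a) a,
    dotProduct_comm y a] at this
  linarith

lemma PosSemidef.mul_dotProduct_inv_mulVec_le (hM : M.PosSemidef) (hMu : IsUnit M)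
    (hN : IsUnit N) {c : ℝ} (hc : 0 ≤ c) (hle : ∀ x, c * (x ⬝ᵥ M *ᵥ x) ≤ x ⬝ᵥ N *ᵥ x)
    (a : n → ℝ) : c * (a ⬝ᵥ N⁻¹ *ᵥ a) ≤ a ⬝ᵥ M⁻¹ *ᵥ a := by
  set y := N⁻¹ *ᵥ a
  have hy : N *ᵥ y = a := by
    rw [mulVec_mulVec, mul_nonsing_inv _ ((isUnit_iff_isUnit_det N).1 hN), one_mulVec]
  have hvar := hM.two_mul_dotProduct_sub_le_inv hMu a (c • y)
  have hdom := hle y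
  rw [hy, dotProduct_comm y a] at hdom
  simp only [mulVec_smul, dotProduct_smul, smul_dotProduct, smul_eq_mul] at hvar
  nlinarith [mul_le_mul_of_nonneg_left hdom hc]

end Matrix

section DesignMatrix

variable {ι n : Type*} (s : Finset ι) (w : ι → ℝ) (v : ι → n → ℝ)

def designMatrix : Matrix n n ℝ := ∑ i ∈ s, w i • vecMulVec (v i) (v i)

lemma isHermitian_designMatrix : (designMatrix s w v).IsHermitian := by
  simp only [designMatrix, IsHermitian, conjTranspose_sum, conjTranspose_smul,
    conjTranspose_vecMulVec, star_trivial]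

variable {s w v} in
lemma designMatrix_attach : designMatrix s.attach (fun i => w i) (fun i => v i) =
    designMatrix s w v :=
  Finset.sum_attach s fun i => w i • vecMulVec (v i) (v i)

variable [Fintype n]

lemma designMatrix_mulVec (x : n → ℝ) :
    designMatrix s w v *ᵥ x = ∑ i ∈ s, (w i * (v i ⬝ᵥ x)) • v i := by
  simp only [designMatrix, sum_mulVec, smul_mulVec, vecMulVec_mulVec, op_smul_eq_smul,
    smul_smul]

lemma dotProduct_designMatrix_mulVec (x : n → ℝ) :
    x ⬝ᵥ designMatrix s w v *ᵥ x = ∑ i ∈ s, w i * (v i ⬝ᵥ x) ^ 2 := by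
  rw [designMatrix_mulVec, dotProduct_sum]
  refine Finset.sum_congr rfl fun i _ => ?_
  rw [dotProduct_smul, smul_eq_mul, dotProduct_comm]
  ring

variable {s w v}

lemma posSemidef_designMatrix (hw : ∀ i ∈ s, 0 ≤ w i) : (designMatrix s w v).PosSemidef :=
  .of_dotProduct_mulVec_nonneg (isHermitian_designMatrix s w v) fun x => by
    rw [star_trivial, dotProduct_designMatrix_mulVec]
    exact Finset.sum_nonneg fun i hi => mul_nonneg (hw i hi) (sq_nonneg _)

lemma mul_dotProduct_designMatrix_mulVec_le {w' : ι → ℝ} {c : ℝ}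
    (hle : ∀ i ∈ s, c * w i ≤ w' i) (x : n → ℝ) :
    c * (x ⬝ᵥ designMatrix s w v *ᵥ x) ≤ x ⬝ᵥ designMatrix s w' v *ᵥ x := by
  simp only [dotProduct_designMatrix_mulVec, Finset.mul_sum, ← mul_assoc]
  exact Finset.sum_le_sum fun i hi => mul_le_mul_of_nonneg_right (hle i hi) (sq_nonneg _)

variable [DecidableEq n]

variable (s w v) in
noncomputable def leastSquaresEstimate (y : ι → ℝ) : n → ℝ :=
  (designMatrix s w v)⁻¹ *ᵥ ∑ i ∈ s, y i • v i

lemma dotProduct_inv_designMatrix_mulVec (hV : IsUnit (designMatrix s w v)) (a : n → ℝ) :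
    a ⬝ᵥ (designMatrix s w v)⁻¹ *ᵥ a =
      ∑ i ∈ s, w i * (a ⬝ᵥ (designMatrix s w v)⁻¹ *ᵥ v i) ^ 2 := by
  set V := designMatrix s w v
  have hy : V *ᵥ (V⁻¹ *ᵥ a) = a := by
    rw [mulVec_mulVec, mul_nonsing_inv _ ((isUnit_iff_isUnit_det V).1 hV), one_mulVec]
  have hsymm := (isHermitian_designMatrix s w v).inv
  calc a ⬝ᵥ V⁻¹ *ᵥ a = V⁻¹ *ᵥ a ⬝ᵥ V *ᵥ (V⁻¹ *ᵥ a) := by rw [hy, dotProduct_comm]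
    _ = _ := by
      rw [dotProduct_designMatrix_mulVec]
      exact Finset.sum_congr rfl fun i _ => by rw [hsymm.dotProduct_mulVec_comm a]

lemma leastSquaresEstimate_sub (hV : IsUnit (designMatrix s w v)) (θ : n → ℝ) (e : ι → ℝ) :
    leastSquaresEstimate s w v (fun i => w i * (θ ⬝ᵥ v i) + e i) - θ =
      (designMatrix s w v)⁻¹ *ᵥ ∑ i ∈ s, e i • v i := by
  have hθ : ∑ i ∈ s, (w i * (θ ⬝ᵥ v i)) • v i = designMatrix s w v *ᵥ θ := by
    simp only [designMatrix_mulVec, dotProduct_comm θ]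
  simp only [leastSquaresEstimate, add_smul, Finset.sum_add_distrib, hθ, mulVec_add,
    mulVec_mulVec, nonsing_inv_mul _ ((isUnit_iff_isUnit_det _).1 hV), one_mulVec,
    add_sub_cancel_left]

lemma isUnit_designMatrix_of_mul_le {w' : ι → ℝ} {c : ℝ} (hw : ∀ i ∈ s, 0 ≤ w i)
    (hW : IsUnit (designMatrix s w v)) (hc : 0 < c) (hle : ∀ i ∈ s, c * w i ≤ w' i) :
    IsUnit (designMatrix s w' v) :=
  (((posSemidef_designMatrix hw).posDef_iff_isUnit.2 hW).of_mul_le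
    (isHermitian_designMatrix s w' v) hc (mul_dotProduct_designMatrix_mulVec_le hle)).isUnit

lemma dotProduct_inv_designMatrix_mulVec_le_div {w' : ι → ℝ} {c : ℝ}
    (hw : ∀ i ∈ s, 0 ≤ w i) (hW : IsUnit (designMatrix s w v)) (hc : 0 < c)
    (hle : ∀ i ∈ s, c * w i ≤ w' i) (a : n → ℝ) :
    a ⬝ᵥ (designMatrix s w' v)⁻¹ *ᵥ a ≤ (a ⬝ᵥ (designMatrix s w v)⁻¹ *ᵥ a) / c := by
  rw [le_div_iff₀' hc]
  exact (posSemidef_designMatrix hw).mul_dotProduct_inv_mulVec_le hW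
    (isUnit_designMatrix_of_mul_le hw hW hc hle) hc.le
    (mul_dotProduct_designMatrix_mulVec_le hle) a

lemma abs_dotProduct_leastSquaresEstimate_sub_le (hw : ∀ i ∈ s, 0 ≤ w i)
    (hV : IsUnit (designMatrix s w v)) {τ : ℝ} {a : n → ℝ}
    (ha : a ⬝ᵥ (designMatrix s w v)⁻¹ *ᵥ a ≤ τ)
    (hv : ∀ i ∈ s, v i ⬝ᵥ (designMatrix s w v)⁻¹ *ᵥ v i ≤ τ) (θ : n → ℝ) (e z : ι → ℝ) :
    |a ⬝ᵥ (leastSquaresEstimate s w v (fun i => w i * (θ ⬝ᵥ v i) + e i + z i) - θ)| ≤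
      |∑ i ∈ s, (a ⬝ᵥ (designMatrix s w v)⁻¹ *ᵥ v i) * e i| + τ * ∑ i ∈ s, |z i| := by
  have hcoef (i) (hi : i ∈ s) : |a ⬝ᵥ (designMatrix s w v)⁻¹ *ᵥ v i| ≤ τ := by
    have := (posSemidef_designMatrix (v := v) hw).inv.two_mul_abs_dotProduct_mulVec_le a (v i)
    linarith [hv i hi]
  have hsplit : a ⬝ᵥ (leastSquaresEstimate s w v (fun i => w i * (θ ⬝ᵥ v i) + e i + z i) - θ) =
      ∑ i ∈ s, (a ⬝ᵥ (designMatrix s w v)⁻¹ *ᵥ v i) * e i +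
        ∑ i ∈ s, (a ⬝ᵥ (designMatrix s w v)⁻¹ *ᵥ v i) * z i := by
    simp_rw [add_assoc, leastSquaresEstimate_sub hV, mulVec_sum, mulVec_smul, dotProduct_sum,
      dotProduct_smul, smul_eq_mul, ← Finset.sum_add_distrib]
    exact Finset.sum_congr rfl fun i _ => by ring
  rw [hsplit]
  refine (abs_add_le _ _).trans (add_le_add_right ((Finset.abs_sum_le_sum_abs _ _).trans ?_) _)
  rw [Finset.mul_sum]
  exact Finset.sum_le_sum fun i hi => by
    rw [abs_mul]; exact mul_le_mul_of_nonneg_right (hcoef i hi) (abs_nonneg _)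

end DesignMatrix

section PrivatizedLeastSquares

variable {ι κ n Ω : Type*} [Fintype ι] [Fintype n] [DecidableEq n] [MeasurableSpace Ω]
  {μ : Measure Ω} [IsProbabilityMeasure μ] {N : ι → ℕ} {v : ι → n → ℝ}
  {η : (i : ι) → Fin (N i) → Ω → ℝ} {z : ι → Ω → ℝ} {ε τ b L : ℝ}

theorem measureReal_exists_lt_abs_dotProduct_leastSquaresEstimate_sub_le
    (hindep : iIndepFun (Sum.elim (fun p : Σ i, Fin (N i) => η p.1 p.2) z) μ)
    (hη : ∀ i k, HasSubgaussianMGF (η i k) 1 μ) (hz : ∀ i, Measurable (z i))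
    (hlaw : ∀ i, μ.map (z i) = laplaceMeasure ε) (hε : 0 < ε)
    (hV : IsUnit (designMatrix Finset.univ (fun i => (N i : ℝ)) v))
    (A : Finset κ) (a : κ → n → ℝ) (hτ : 0 < τ)
    (hA : ∀ j ∈ A, a j ⬝ᵥ (designMatrix Finset.univ (fun i => (N i : ℝ)) v)⁻¹ *ᵥ a j ≤ τ)
    (hv : ∀ i, v i ⬝ᵥ (designMatrix Finset.univ (fun i => (N i : ℝ)) v)⁻¹ *ᵥ v i ≤ τ)
    (hb : (Fintype.card ι : ℝ) ≤ b) (hL : 0 ≤ L) (θ : n → ℝ) :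
    μ.real {ω | ∃ j ∈ A, √(2 * τ * L) + τ * (2 * (b + L) / ε) <
      |a j ⬝ᵥ (leastSquaresEstimate Finset.univ (fun i => (N i : ℝ)) v
        (fun i => N i * (θ ⬝ᵥ v i) + ∑ k, η i k ω + z i ω) - θ)|} ≤
      (1 + 2 * A.card) * Real.exp (-L) := by
  set V := designMatrix Finset.univ (fun i => (N i : ℝ)) v
  set t := 2 * (b + L) / ε
  set Z := {ω | t ≤ ∑ i, |z i ω|}
  set G := fun j => {ω | √(2 * τ * L) ≤ |∑ i, (a j ⬝ᵥ V⁻¹ *ᵥ v i) * ∑ k, η i k ω|}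
  have hZ : μ.real Z ≤ Real.exp (-L) :=
    measureReal_le_sum_abs_le (hindep.precomp Sum.inr_injective) hz hlaw hε hb L
  have hG (j) (hj : j ∈ A) : μ.real (G j) ≤ 2 * Real.exp (-L) :=
    measureReal_sqrt_le_abs_sum_mul_sum_le (hindep.precomp Sum.inl_injective) hη _
      ((dotProduct_inv_designMatrix_mulVec hV (a j)).symm.trans_le (hA j hj)) hτ hL
  have hsub : {ω | ∃ j ∈ A, √(2 * τ * L) + τ * t <
      |a j ⬝ᵥ (leastSquaresEstimate Finset.univ (fun i => (N i : ℝ)) v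
        (fun i => N i * (θ ⬝ᵥ v i) + ∑ k, η i k ω + z i ω) - θ)|} ⊆ Z ∪ ⋃ j ∈ A, G j := by
    rintro ω ⟨j, hj, hω⟩
    by_cases hZω : t ≤ ∑ i, |z i ω|
    · exact Or.inl hZω
    refine Or.inr (Set.mem_biUnion hj ?_)
    have herr := abs_dotProduct_leastSquaresEstimate_sub_le (fun _ _ => Nat.cast_nonneg _) hV
      (hA j hj) (fun i _ => hv i) θ (fun i => ∑ k, η i k ω) (fun i => z i ω)
    have := mul_le_mul_of_nonneg_left (not_le.1 hZω).le hτ.le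
    show √(2 * τ * L) ≤ _
    linarith
  calc _ ≤ μ.real Z + ∑ j ∈ A, μ.real (G j) := (measureReal_mono hsub).trans <|
        (measureReal_union_le _ _).trans (add_le_add_right (measureReal_biUnion_finset_le _ _) _)
    _ ≤ Real.exp (-L) + ∑ j ∈ A, 2 * Real.exp (-L) := add_le_add hZ (Finset.sum_le_sum hG)
    _ = (1 + 2 * A.card) * Real.exp (-L) := by rw [Finset.sum_const, nsmul_eq_mul]; ring

end PrivatizedLeastSquares

theorem central_privatized_ls_concentration_general
    (d K T : ℕ) (hd : 1 ≤ d) (hK : 1 ≤ K) (hT : 2 ≤ T)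
    (ε m B : ℝ) (hε : 0 < ε) (hm : 1 ≤ m)
    (A : Finset (EuclideanSpace ℝ (Fin d)))
    (hA_card : A.card ≤ K)
    (C : Finset (EuclideanSpace ℝ (Fin d))) (hC_sub : C ⊆ A)
    (hC_card : (C.card : ℝ) ≤ B * d)
    (π : EuclideanSpace ℝ (Fin d) → ℝ)
    (hπ_mem : ∀ α ∈ C, π α ∈ Set.Icc (0 : ℝ) 1)
    (hW_unit : IsUnit (∑ α ∈ C, π α • vecMulVec (α : Fin d → ℝ) (α : Fin d → ℝ)))
    (hW_quad : ∀ a ∈ A,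
      (a : Fin d → ℝ) ⬝ᵥ
          (∑ α ∈ C, π α • vecMulVec (α : Fin d → ℝ) (α : Fin d → ℝ))⁻¹ *ᵥ
            (a : Fin d → ℝ) ≤ 2 * d)
    (θs : Fin d → ℝ)
    {Ω : Type*} [MeasurableSpace Ω] (μ : Measure Ω) [IsProbabilityMeasure μ]
    (η : (α : {x // x ∈ C}) → Fin ⌈π α.1 * m⌉₊ → Ω → ℝ)
    (z : {x // x ∈ C} → Ω → ℝ)
    (hz_meas : ∀ α, Measurable (z α))
    (h_indep : iIndepFun
      (Sum.elim (fun p : Σ α : {x // x ∈ C}, Fin ⌈π α.1 * m⌉₊ => η p.1 p.2) z) μ)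
    (hη_subg : ∀ α k, ∀ lam : ℝ,
      Integrable (fun ω => Real.exp (lam * η α k ω)) μ ∧
        ∫ ω, Real.exp (lam * η α k ω) ∂μ ≤ Real.exp (lam ^ 2 / 2))
    (hz_law : ∀ α, Measure.map (z α) μ = laplaceMeasure ε) :
    μ {ω | ∃ a ∈ A,
        Real.sqrt ((4 * d / m) * Real.log (4 * K * (T : ℝ) ^ 2)) +
            4 * (B * d ^ 2 + d * Real.log (4 * K * (T : ℝ) ^ 2)) / (ε * m) <
          |(a : Fin d → ℝ) ⬝ᵥ
            (((∑ α ∈ C, (⌈π α * m⌉₊ : ℝ) •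
                  vecMulVec (α : Fin d → ℝ) (α : Fin d → ℝ))⁻¹ *ᵥ
                (∑ α ∈ C.attach,
                  ((⌈π α.1 * m⌉₊ : ℝ) * (θs ⬝ᵥ (α.1 : Fin d → ℝ)) +
                      (∑ k, η α k ω) + z α ω) • (α.1 : Fin d → ℝ))) - θs)|} ≤
      ENNReal.ofReal (1 / (T : ℝ) ^ 2) := by
  set L := Real.log (4 * K * (T : ℝ) ^ 2)
  have hm0 : 0 < m := by linarith
  have hπ0 : ∀ α ∈ C, 0 ≤ π α := fun α hα => (hπ_mem α hα).1
  have hπn : ∀ α ∈ C, m * π α ≤ ⌈π α * m⌉₊ := fun α _ => mul_comm m (π α) ▸ Nat.le_ceil _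
  set V := designMatrix Finset.univ (fun α : C => (⌈π α.1 * m⌉₊ : ℝ)) (fun α => (α.1 : Fin d → ℝ))
  have hVC : V = designMatrix C (fun α => (⌈π α * m⌉₊ : ℝ)) (fun α => (α : Fin d → ℝ)) :=
    designMatrix_attach (w := fun α => (⌈π α * m⌉₊ : ℝ)) (v := fun α => (α : Fin d → ℝ))
  have hVA (a) (ha : a ∈ A) : (a : Fin d → ℝ) ⬝ᵥ V⁻¹ *ᵥ a ≤ 2 * d / m := by
    rw [hVC]
    exact (dotProduct_inv_designMatrix_mulVec_le_div hπ0 hW_unit hm0 hπn a).trans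
      (div_le_div_of_nonneg_right (hW_quad a ha) hm0.le)
  have hVu : IsUnit V := hVC ▸ isUnit_designMatrix_of_mul_le hπ0 hW_unit hm0 hπn
  have key := measureReal_exists_lt_abs_dotProduct_leastSquaresEstimate_sub_le
    (b := B * d) (L := L) h_indep
    (fun α k => ⟨fun t => (hη_subg α k t).1, fun t => by simpa [mgf] using (hη_subg α k t).2⟩)
    hz_meas hz_law hε hVu A WithLp.ofLp
    (by positivity) hVA (fun α => hVA α (hC_sub α.2)) (by rwa [Fintype.card_coe])
    (Real.log_nonneg (by norm_cast; nlinarith)) θs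
  rw [← show V = ∑ α ∈ C, (⌈π α * m⌉₊ : ℝ) • vecMulVec (α : Fin d → ℝ) α from hVC,
    show 4 * d / m * L = 2 * (2 * d / m) * L by ring,
    show 4 * (B * d ^ 2 + d * L) / (ε * m) = 2 * d / m * (2 * (B * d + L) / ε) by
      field_simp; ring]
  rw [ENNReal.le_ofReal_iff_toReal_le (measure_ne_top _ _) (by positivity)]
  refine key.trans ?_
  have hA : (A.card : ℝ) ≤ K := by exact_mod_cast hA_card
  have hK1 : (1 : ℝ) ≤ K := by exact_mod_cast hK
  rw [Real.exp_neg, Real.exp_log (by positivity)]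
  field_simp
  nlinarith

/-- **Per-phase concentration for the centrally privatized least-squares estimate**
(Lemma 3 of the paper, Algorithm 1): each core-set action `α` is pulled
`n_α = ⌈π(α)·m⌉` times, the sum of its rewards is perturbed by a single
`Lap(1/ε)` noise `z_α`, and `θ̂` is the least-squares estimate from the perturbed
sums.  Then with
`γ = √((4d/m)·ln(4KT²)) + 4(Bd² + d·ln(4KT²))/(ε m)`,
`P[∃ a ∈ A, |⟨a, θ̂ − θ*⟩| > γ] ≤ 1/T²`. -/
theorem central_privatized_ls_concentration
    (d K T : ℕ) (hd : 1 ≤ d) (hK : 1 ≤ K) (hT : 2 ≤ T)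
    (ε m B : ℝ) (hε : 0 < ε) (hm : 1 ≤ m) (hB : 1 ≤ B)
    (A : Finset (EuclideanSpace ℝ (Fin d))) (hA_ne : A.Nonempty)
    (hA_card : A.card ≤ K)
    (hA_ball : ∀ a ∈ A, ‖a‖ ≤ 1)
    (C : Finset (EuclideanSpace ℝ (Fin d))) (hC_sub : C ⊆ A)
    (hC_card : (C.card : ℝ) ≤ B * d)
    (π : EuclideanSpace ℝ (Fin d) → ℝ)
    (hπ_mem : ∀ α ∈ C, π α ∈ Set.Icc (0 : ℝ) 1)
    (hπ_sum : ∑ α ∈ C, π α = 1)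
    (hW_unit : IsUnit (∑ α ∈ C, π α • vecMulVec (α : Fin d → ℝ) (α : Fin d → ℝ)))
    (hW_quad : ∀ a ∈ A,
      (a : Fin d → ℝ) ⬝ᵥ
          (∑ α ∈ C, π α • vecMulVec (α : Fin d → ℝ) (α : Fin d → ℝ))⁻¹ *ᵥ
            (a : Fin d → ℝ) ≤ 2 * d)
    (θs : Fin d → ℝ)
    {Ω : Type*} [MeasurableSpace Ω] (μ : Measure Ω) [IsProbabilityMeasure μ]
    (η : (α : {x // x ∈ C}) → Fin ⌈π α.1 * m⌉₊ → Ω → ℝ)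
    (z : {x // x ∈ C} → Ω → ℝ)
    (hη_meas : ∀ α k, Measurable (η α k))
    (hz_meas : ∀ α, Measurable (z α))
    (h_indep : iIndepFun
      (Sum.elim (fun p : Σ α : {x // x ∈ C}, Fin ⌈π α.1 * m⌉₊ => η p.1 p.2) z) μ)
    (hη_subg : ∀ α k, ∀ lam : ℝ,
      Integrable (fun ω => Real.exp (lam * η α k ω)) μ ∧
        ∫ ω, Real.exp (lam * η α k ω) ∂μ ≤ Real.exp (lam ^ 2 / 2))
    (hz_law : ∀ α, Measure.map (z α) μ = laplaceMeasure ε) :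
    μ {ω | ∃ a ∈ A,
        Real.sqrt ((4 * d / m) * Real.log (4 * K * (T : ℝ) ^ 2)) +
            4 * (B * d ^ 2 + d * Real.log (4 * K * (T : ℝ) ^ 2)) / (ε * m) <
          |(a : Fin d → ℝ) ⬝ᵥ
            (((∑ α ∈ C, (⌈π α * m⌉₊ : ℝ) •
                  vecMulVec (α : Fin d → ℝ) (α : Fin d → ℝ))⁻¹ *ᵥ
                (∑ α ∈ C.attach,
                  ((⌈π α.1 * m⌉₊ : ℝ) * (θs ⬝ᵥ (α.1 : Fin d → ℝ)) +
                      (∑ k, η α k ω) + z α ω) • (α.1 : Fin d → ℝ))) - θs)|} ≤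
      ENNReal.ofReal (1 / (T : ℝ) ^ 2) :=
  central_privatized_ls_concentration_general d K T hd hK hT ε m B hε hm A hA_card C hC_sub hC_card
    π hπ_mem hW_unit hW_quad θs μ η z hz_meas h_indep hη_subg hz_law
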